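/- arXiv:2505.12755 — 3 statements merged into one kernel-verified Lean document; each statement's English description precedes it below -/
import Mathlib

section
/- Let A, B ∈ M_n(ℂ), and let A = S + N be a Jordan–Chevalley decomposition of A (S diagonalizable, N nilpotent, SN = NS). If ad_A^k(B) = 0 for some integer k > 0, where ad_A(X) = AX − XA, then [S, B] = 0. -/
/-!
Write `ad X = ⁅X, ·⁆`. Since `S` and `N` commute, `ad A = ad S + ad N` with `ad S` and `ad N`
commuting, `ad N` nilpotent and `ad S` semisimple (it is conjugate, through `Matrix.toLin'`, to
the adjoint action of a semisimple endomorphism). Hence `ad S` preserves `ker (ad A)^k`, and its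
restriction there equals `ad A - ad N`, a sum of commuting nilpotents. Being both nilpotent and
semisimple, that restriction vanishes, so `ad S B = 0`.
-/

def Matrix.IsDiagonalizable {n : ℕ} (A : Matrix (Fin n) (Fin n) ℂ) : Prop :=
  ∃ P : Matrix (Fin n) (Fin n) ℂ, IsUnit P ∧ (P * A * P⁻¹).IsDiag

open Polynomial LieAlgebra

theorem Matrix.isSemisimple_toLin'_diagonal {ι K : Type*} [Fintype ι] [DecidableEq ι] [Field K]
    (d : ι → K) : Module.End.IsSemisimple (toLin' (diagonal d)) := by
  classical
  set p := ∏ c ∈ Finset.univ.image d, (X - C c)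
  have hp : aeval d p = 0 := funext fun i => by
    simpa [p, eval_prod] using
      Finset.prod_eq_zero (Finset.mem_image_of_mem d (Finset.mem_univ i)) (sub_self (d i))
  refine Module.End.isSemisimple_of_squarefree_aeval_eq_zero (p := p) ?_ ?_
  · exact (separable_prod_X_sub_C_iff'.mpr fun _ _ _ _ h => h).squarefree
  · change aeval (toLinAlgEquiv' (diagonalAlgHom K d)) p = 0
    rw [aeval_algEquiv, AlgHom.comp_apply, aeval_algHom_apply, hp, map_zero, map_zero]

theorem Matrix.IsDiagonalizable.isSemisimple_toLin' {n : ℕ} {S : Matrix (Fin n) (Fin n) ℂ}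
    (hS : S.IsDiagonalizable) : Module.End.IsSemisimple (toLin' S) := by
  obtain ⟨P, hP, hD⟩ := hS
  let := hP.invertible
  rw [LinearEquiv.isSemisimple_iff _ (toLin' (P * S * P⁻¹)) (P.toLinearEquiv' this) ?_,
    ← hD.diagonal_diag]
  · exact isSemisimple_toLin'_diagonal _
  · rw [toLinearEquiv'_apply, ← toLin'_mul, ← toLin'_mul, inv_mul_cancel_right_of_invertible]

section

attribute [local instance] LieRing.ofAssociativeRing

theorem Matrix.IsDiagonalizable.isSemisimple_ad {n : ℕ} {S : Matrix (Fin n) (Fin n) ℂ}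
    (hS : S.IsDiagonalizable) : (ad ℂ (Matrix (Fin n) (Fin n) ℂ) S).IsSemisimple := by
  rw [LinearEquiv.isSemisimple_iff _ (ad ℂ _ (toLinAlgEquiv' S)) toLinAlgEquiv'.toLinearEquiv ?_]
  · exact ad_isSemisimple_of_isSemisimple hS.isSemisimple_toLin'
  · ext X : 1
    simp [Ring.lie_def]

theorem lie_eq_zero_of_iterate_lie_eq_zero {R A : Type*} [CommRing R] [Ring A] [Algebra R A]
    {s n b : A} (hs : (ad R A s).IsFinitelySemisimple) (hn : IsNilpotent n) (hsn : Commute s n)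
    {k : ℕ} (h : (fun x => ⁅s + n, x⁆)^[k] b = 0) : ⁅s, b⁆ = 0 := by
  have hb : b ∈ (ad R A (s + n)).genEigenspace 0 k := by
    rwa [Module.End.mem_genEigenspace_nat, zero_smul, sub_zero, LinearMap.mem_ker,
      Module.End.pow_apply]
  have hcomm : Commute (ad R A (s + n)) (ad R A s) :=
    commute_ad_of_commute ((Commute.refl s).add_left hsn.symm)
  have hnil : IsNilpotent (ad R A (s + n) - ad R A s) := by
    simpa using ad_nilpotent_of_nilpotent (R := R) hn
  simpa using Module.End.apply_eq_of_mem_of_comm_of_isFinitelySemisimple_of_isNil hb hcomm hs hnil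

end

theorem lie_semisimplePart_eq_zero_of_ad_pow_eq_zero_general {n : ℕ}
    (A B S N : Matrix (Fin n) (Fin n) ℂ)
    (hA : A = S + N) (hS : S.IsDiagonalizable) (hN : IsNilpotent N)
    (hSN : S * N = N * S) (k : ℕ)
    (h : (fun X => ⁅A, X⁆)^[k] B = 0) :
    ⁅S, B⁆ = 0 := by
  subst hA
  exact lie_eq_zero_of_iterate_lie_eq_zero hS.isSemisimple_ad.isFinitelySemisimple hN hSN h

/-- If `A = S + N` is a Jordan–Chevalley decomposition of `A` and `ad_A^k(B) = 0` for
some `k > 0`, then `[S, B] = 0`. -/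
theorem lie_semisimplePart_eq_zero_of_ad_pow_eq_zero {n : ℕ}
    (A B S N : Matrix (Fin n) (Fin n) ℂ)
    (hA : A = S + N) (hS : S.IsDiagonalizable) (hN : IsNilpotent N)
    (hSN : S * N = N * S) (k : ℕ) (hk : 0 < k)
    (h : (fun X => ⁅A, X⁆)^[k] B = 0) :
    ⁅S, B⁆ = 0 :=
  lie_semisimplePart_eq_zero_of_ad_pow_eq_zero_general A B S N hA hS hN hSN k h
end

section
/- Let 𝔫 be a finite-dimensional nilpotent Lie algebra over ℂ and let ρ : 𝔫 → M_n(ℂ) be a Lie algebra homomorphism. Let x, y ∈ 𝔫 and let ρ(x) = S_x + N_x and ρ(y) = S_y + N_y be Jordan–Chevalley decompositions. Then N_x + N_y is the nilpotent part of ρ(x+y); that is, N_x + N_y is nilpotent, commutes with ρ(x+y), and ρ(x+y) − (N_x + N_y) is diagonalizable. -/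
/-
On the generalized weight space of a weight `χ`, the semisimple part of `ρ z` acts as the scalar
`χ z`: it commutes with `ρ z` and differs from it by a nilpotent map, so it is semisimple with the
single eigenvalue `χ z` there. Weights of a nilpotent Lie algebra in characteristic zero are
linear, so `Sx + Sy` and the semisimple part of `ρ (x + y)` both act as `χ x + χ y = χ (x + y)` on
every weight space. The weight spaces span, hence the two agree and `Nx + Ny` is the nilpotent part.
-/

open Polynomial Module LieModule

namespace Module.End

def IsSemisimplePart {R V : Type*} [CommRing R] [AddCommGroup V] [Module R V] (s f : End R V) :
    Prop :=
  s.IsSemisimple ∧ Commute f s ∧ IsNilpotent (f - s)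

variable {K V : Type*} [Field K] [AddCommGroup V] [Module K V] {f : End K V}

lemma isSemisimple_of_iSup_eigenspace_eq_top [FiniteDimensional K V]
    (h : ⨆ μ, f.eigenspace μ = ⊤) : f.IsSemisimple := by
  classical
  set p : K[X] := ∏ μ ∈ f.finite_hasEigenvalue.toFinset, (X - C μ)
  have hp : Squarefree p :=
    (separable_prod_X_sub_C_iff'.mpr fun _ _ _ _ h ↦ h).squarefree
  refine isSemisimple_of_squarefree_aeval_eq_zero hp ?_
  rw [← LinearMap.ker_eq_top, eq_top_iff, ← h]
  refine iSup_le fun μ m hm ↦ ?_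
  obtain rfl | hm0 := eq_or_ne m 0
  · exact zero_mem _
  have hμ : f.HasEigenvector μ m := ⟨hm, hm0⟩
  rw [LinearMap.mem_ker, aeval_apply_of_hasEigenvector hμ, eval_prod,
    Finset.prod_eq_zero ((Set.Finite.mem_toFinset _).mpr (hasEigenvalue_of_hasEigenvector hμ))
      (by simp), zero_smul]

lemma iSup_eigenspace_eq_top_of_basis {ι : Type*} (b : Basis ι K V)
    (h : ∀ i, ∃ μ : K, f (b i) = μ • b i) : ⨆ μ, f.eigenspace μ = ⊤ := by
  rw [eq_top_iff, ← b.span_eq, Submodule.span_le]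
  rintro _ ⟨i, rfl⟩
  obtain ⟨μ, hμ⟩ := h i
  exact Submodule.mem_iSup_of_mem μ (mem_eigenspace_iff.mpr hμ)

lemma exists_basis_of_iSup_eigenspace_eq_top (h : ⨆ μ, f.eigenspace μ = ⊤) :
    ∃ (s : Set V) (b : Basis s K V), ∀ i, ∃ μ : K, f (b i) = μ • b i := by
  obtain ⟨s, hs, hspan, hli⟩ := exists_linearIndependent K (⋃ μ, (f.eigenspace μ : Set V))
  refine ⟨s, Basis.mk hli ?_, fun i ↦ ?_⟩
  · rw [Subtype.range_coe, hspan, ← Submodule.iSup_eq_span, h]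
  · obtain ⟨μ, hμ⟩ := Set.mem_iUnion.mp (hs i.2)
    exact ⟨μ, by simpa using mem_eigenspace_iff.mp hμ⟩

end Module.End

namespace Matrix

variable {n : ℕ} {A S N : Matrix (Fin n) (Fin n) ℂ}

lemma IsDiagonalizable.exists_basis (hA : A.IsDiagonalizable) :
    ∃ b : Basis (Fin n) ℂ (Fin n → ℂ), ∀ i, ∃ μ : ℂ, A *ᵥ b i = μ • b i := by
  obtain ⟨P, hP, hD⟩ := hA
  set d := (P * A * P⁻¹).diag
  have hdet : IsUnit P.det := (isUnit_iff_isUnit_det P).mp hP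
  have hAP : A * P⁻¹ = P⁻¹ * diagonal d := by
    rw [hD.diagonal_diag, ← Matrix.mul_assoc, ← Matrix.mul_assoc, nonsing_inv_mul P hdet, one_mul]
  let hinv := invertibleOfIsUnitDet P⁻¹ (isUnit_nonsing_inv_det P hdet)
  refine ⟨(Pi.basisFun ℂ (Fin n)).map (toLinearEquiv' P⁻¹ hinv), fun i ↦ ⟨d i, ?_⟩⟩
  simp only [Basis.map_apply, Pi.basisFun_apply]
  calc A *ᵥ P⁻¹ *ᵥ Pi.single i 1 = P⁻¹ *ᵥ diagonal d *ᵥ Pi.single i 1 := by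
        rw [mulVec_mulVec, hAP, ← mulVec_mulVec]
    _ = d i • P⁻¹ *ᵥ Pi.single i 1 := by
        rw [diagonal_mulVec_single, mul_one, ← mulVec_smul, ← Pi.single_smul, smul_eq_mul, mul_one]

lemma isDiagonalizable_of_basis (b : Basis (Fin n) ℂ (Fin n → ℂ))
    (h : ∀ i, ∃ μ : ℂ, A *ᵥ b i = μ • b i) : A.IsDiagonalizable := by
  choose d hd using h
  set e := Pi.basisFun ℂ (Fin n)
  have hdiag : LinearMap.toMatrix b b (toLin' A) = diagonal d := by
    ext i j
    rcases eq_or_ne i j with rfl | hij <;> simp [LinearMap.toMatrix_apply, *]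
  have hA : e.toMatrix b * diagonal d * b.toMatrix e = A := by
    rw [← hdiag, basis_toMatrix_mul_linearMap_toMatrix_mul_basis_toMatrix,
      LinearMap.toMatrix_eq_toMatrix', LinearMap.toMatrix'_toLin']
  let _ := b.invertibleToMatrix e
  refine ⟨b.toMatrix e, isUnit_of_invertible _, ?_⟩
  rw [inv_eq_left_inv (e.toMatrix_mul_toMatrix_flip b), ← hA]
  simp only [Matrix.mul_assoc, b.toMatrix_mul_toMatrix_flip, Matrix.mul_one]
  rw [← Matrix.mul_assoc, b.toMatrix_mul_toMatrix_flip, Matrix.one_mul]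
  exact isDiag_diagonal d

lemma isDiagonalizable_iff_isSemisimple :
    A.IsDiagonalizable ↔ End.IsSemisimple (toLinAlgEquiv' A) := by
  constructor
  · intro hA
    obtain ⟨b, hb⟩ := hA.exists_basis
    exact End.isSemisimple_of_iSup_eigenspace_eq_top
      (End.iSup_eigenspace_eq_top_of_basis (f := toLinAlgEquiv' A) b hb)
  · intro hA
    obtain ⟨s, b, hb⟩ := End.exists_basis_of_iSup_eigenspace_eq_top hA.iSup_eigenspace_eq_top
    exact isDiagonalizable_of_basis (b.reindex (b.indexEquiv (Pi.basisFun ℂ (Fin n))))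
      fun i ↦ by simpa only [Basis.reindex_apply, toLinAlgEquiv'_apply] using hb _

lemma isSemisimplePart_toLinAlgEquiv'_iff :
    End.IsSemisimplePart (toLinAlgEquiv' S) (toLinAlgEquiv' A) ↔
      S.IsDiagonalizable ∧ Commute A S ∧ IsNilpotent (A - S) := by
  rw [End.IsSemisimplePart, isDiagonalizable_iff_isSemisimple, ← map_sub,
    commute_map_iff toLinAlgEquiv'.injective, IsNilpotent.map_iff toLinAlgEquiv'.injective]

lemma isSemisimplePart_of_eq_add (hA : A = S + N) (hS : S.IsDiagonalizable) (hN : IsNilpotent N)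
    (hSN : S * N = N * S) : End.IsSemisimplePart (toLinAlgEquiv' S) (toLinAlgEquiv' A) := by
  refine isSemisimplePart_toLinAlgEquiv'_iff.mpr ⟨hS, ?_, ?_⟩
  · rw [hA]
    exact (Commute.refl S).add_left (Commute.symm hSN)
  · rwa [hA, add_sub_cancel_left]

end Matrix

namespace LieModule

variable {R K L M : Type*} [LieRing L] [AddCommGroup M] [LieRingModule L M]

lemma apply_eq_smul_of_mem_genWeightSpace [CommRing R] [LieAlgebra R L] [Module R M]
    [LieModule R L M] [LieRing.IsNilpotent L] {z : L} {s : End R M}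
    (hs : s.IsSemisimplePart (toEnd R L M z)) {χ : L → R} {m : M}
    (hm : m ∈ genWeightSpace M χ) : s m = χ z • m := by
  obtain ⟨hss, hcomm, hnil⟩ := hs
  have hm' := genWeightSpace_le_genWeightSpaceOf M z χ hm
  rw [mem_genWeightSpaceOf] at hm'
  exact End.apply_eq_of_mem_of_comm_of_isFinitelySemisimple_of_isNil
    (End.mem_genEigenspace_top.mpr hm') hcomm hss.isFinitelySemisimple hnil

variable [Field K] [LieAlgebra K L] [Module K M] [LieModule K L M] [LieRing.IsNilpotent L]
  [FiniteDimensional K M] [IsTriangularizable K L M]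

lemma ext_genWeightSpace {f g : End K M}
    (h : ∀ χ : Weight K L M, ∀ m ∈ genWeightSpace M χ, f m = g m) : f = g := by
  have hle : ⨆ χ : Weight K L M, (genWeightSpace M χ : Submodule K M) ≤ LinearMap.eqLocus f g :=
    iSup_le fun χ m hm ↦ h χ m hm
  rwa [← LieSubmodule.iSup_toSubmodule, iSup_genWeightSpace_eq_top',
    LieSubmodule.top_toSubmodule, top_le_iff, LinearMap.eqLocus_eq_top] at hle

theorem isSemisimplePart_add [CharZero K] {x y : L} {sx sy : End K M}
    (hx : sx.IsSemisimplePart (toEnd K L M x)) (hy : sy.IsSemisimplePart (toEnd K L M y)) :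
    (sx + sy).IsSemisimplePart (toEnd K L M (x + y)) := by
  obtain ⟨n, -, s, hs, hn, hss, hdecomp⟩ := (toEnd K L M (x + y)).exists_isNilpotent_isSemisimple
  have hsp : s.IsSemisimplePart (toEnd K L M (x + y)) :=
    ⟨hss, Algebra.commute_of_mem_adjoin_self hs, by rwa [hdecomp, add_sub_cancel_right]⟩
  convert hsp
  refine ext_genWeightSpace (L := L) fun χ m hm ↦ ?_
  rw [LinearMap.add_apply, apply_eq_smul_of_mem_genWeightSpace hx hm,
    apply_eq_smul_of_mem_genWeightSpace hy hm, apply_eq_smul_of_mem_genWeightSpace hsp hm,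
    map_add χ x y, add_smul]

end LieModule

attribute [local instance] LieRing.ofAssociativeRing

theorem nilpotentPart_add_general {L : Type*} [LieRing L] [LieAlgebra ℂ L]
    [LieRing.IsNilpotent L] {n : ℕ}
    (ρ : L →ₗ⁅ℂ⁆ Matrix (Fin n) (Fin n) ℂ) (x y : L)
    (Sx Nx Sy Ny : Matrix (Fin n) (Fin n) ℂ)
    (hx : ρ x = Sx + Nx) (hSx : Sx.IsDiagonalizable) (hNx : IsNilpotent Nx)
    (hSNx : Sx * Nx = Nx * Sx)
    (hy : ρ y = Sy + Ny) (hSy : Sy.IsDiagonalizable) (hNy : IsNilpotent Ny)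
    (hSNy : Sy * Ny = Ny * Sy) :
    IsNilpotent (Nx + Ny) ∧
      (Nx + Ny) * ρ (x + y) = ρ (x + y) * (Nx + Ny) ∧
      (ρ (x + y) - (Nx + Ny)).IsDiagonalizable := by
  let π : L →ₗ⁅ℂ⁆ End ℂ (Fin n → ℂ) := lieEquivMatrix'.symm.toLieHom.comp ρ
  let _ : LieRingModule L (Fin n → ℂ) := LieRingModule.compLieHom _ π
  let _ : LieModule ℂ L (Fin n → ℂ) := LieModule.compLieHom _ π
  have hsum := isSemisimplePart_add (L := L) (M := Fin n → ℂ)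
    (Matrix.isSemisimplePart_of_eq_add hx hSx hNx hSNx)
    (Matrix.isSemisimplePart_of_eq_add hy hSy hNy hSNy)
  rw [← map_add] at hsum
  obtain ⟨hdiag, hcomm, hnil⟩ := Matrix.isSemisimplePart_toLinAlgEquiv'_iff.mp hsum
  have hN : Nx + Ny = ρ (x + y) - (Sx + Sy) := by rw [map_add, hx, hy]; abel
  rw [hN, sub_sub_cancel]
  exact ⟨hnil, ((Commute.refl _).sub_left hcomm.symm).eq, hdiag⟩

/-- Let `ρ` be a matrix representation of a finite-dimensional nilpotent complex Lie
algebra `𝔫`, and let `ρ x = Sx + Nx`, `ρ y = Sy + Ny` be Jordan–Chevalley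
decompositions.  Then `Nx + Ny` is the nilpotent part of `ρ (x + y)`: it is
nilpotent, commutes with `ρ (x + y)`, and `ρ (x + y) - (Nx + Ny)` is diagonalizable. -/
theorem nilpotentPart_add {L : Type*} [LieRing L] [LieAlgebra ℂ L]
    [FiniteDimensional ℂ L] [LieRing.IsNilpotent L] {n : ℕ}
    (ρ : L →ₗ⁅ℂ⁆ Matrix (Fin n) (Fin n) ℂ) (x y : L)
    (Sx Nx Sy Ny : Matrix (Fin n) (Fin n) ℂ)
    (hx : ρ x = Sx + Nx) (hSx : Sx.IsDiagonalizable) (hNx : IsNilpotent Nx)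
    (hSNx : Sx * Nx = Nx * Sx)
    (hy : ρ y = Sy + Ny) (hSy : Sy.IsDiagonalizable) (hNy : IsNilpotent Ny)
    (hSNy : Sy * Ny = Ny * Sy) :
    IsNilpotent (Nx + Ny) ∧
      (Nx + Ny) * ρ (x + y) = ρ (x + y) * (Nx + Ny) ∧
      (ρ (x + y) - (Nx + Ny)).IsDiagonalizable :=
  nilpotentPart_add_general ρ x y Sx Nx Sy Ny hx hSx hNx hSNx hy hSy hNy hSNy
end

section
/- Let A, B ∈ M_n(ℂ) with Jordan–Chevalley decompositions A = S + N and B = S' + N' (S, S' diagonalizable; N, N' nilpotent; SN = NS and S'N' = N'S'). If exp(2πi·A) = exp(2πi·B), then exp(2πi·S) = exp(2πi·S') and N = N'. -/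
/-!
Write `c = 2πi`. As `S` and `N` commute, `exp (c A) = exp (c S) + exp (c S) (exp (c N) - 1)`,
a sum of a diagonalizable matrix and a commuting nilpotent one. Uniqueness of the
Jordan–Chevalley decomposition of `exp (c A) = exp (c B)` therefore gives `exp (c S) = exp (c S')`
and, after cancelling the unit `exp (c S)`, `exp (c N) = exp (c N')`. Finally `exp` is injective
on nilpotent elements: for nilpotent `x`, `k ↦ exp (k • x)` is a polynomial in `k` whose linear
coefficient is `x`.
-/

open Finset Polynomial
open scoped Nat

theorem Polynomial.aeval_conj_of_mul_eq_one {R A : Type*} [CommSemiring R] [Semiring A]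
    [Algebra R A] {u v : A} (huv : u * v = 1) (hvu : v * u = 1) (a : A) (p : R[X]) :
    aeval (u * a * v) p = u * aeval a p * v := by
  simpa [ConjAct.units_smul_def] using aeval_algHom_apply
    (MulSemiringAction.toAlgHom R A (ConjAct.toConjAct (⟨u, v, huv, hvu⟩ : Aˣ))) a p

theorem eq_zero_of_forall_sum_natCast_pow_smul_eq_zero {K V : Type*} [Field K] [CharZero K]
    [AddCommGroup V] [Module K V] {m : ℕ} {v : ℕ → V}
    (h : ∀ k : ℕ, ∑ i ∈ range m, (k : K) ^ i • v i = 0) {j : ℕ} (hj : j < m) : v j = 0 := by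
  refine (Module.forall_dual_apply_eq_zero_iff K (v j)).mp fun f => ?_
  set p : K[X] := ∑ i ∈ range m, C (f (v i)) * X ^ i
  have hp : p = 0 := by
    refine eq_zero_of_infinite_isRoot p
      (Set.infinite_of_injective_forall_mem Nat.cast_injective fun k => ?_)
    have hk := congr_arg f (h k)
    simp only [map_sum, map_smul, smul_eq_mul, map_zero] at hk
    simp only [p, IsRoot, eval_finsetSum, eval_mul, eval_C, eval_pow, eval_X]
    rw [← hk]
    exact sum_congr rfl fun i _ => mul_comm _ _
  simpa [p, finsetSum_coeff, coeff_C_mul_X_pow, hj] using congr_arg (coeff · j) hp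

namespace IsNilpotent

variable {A : Type*} [Ring A] [Module ℚ A]

theorem exp_nsmul {a : A} (ha : IsNilpotent a) (k : ℕ) : exp (k • a) = exp a ^ k := by
  induction k with
  | zero => simp
  | succ k ih =>
    rw [succ_nsmul, exp_add_of_commute ((Commute.refl a).smul_left k) (ha.smul k) ha, ih,
      _root_.pow_succ]

theorem eq_of_exp_eq {a b : A} (ha : IsNilpotent a) (hb : IsNilpotent b) (h : exp a = exp b) :
    a = b := by
  obtain ⟨m, ham, hbm⟩ : ∃ m, a ^ (m + 2) = 0 ∧ b ^ (m + 2) = 0 := by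
    obtain ⟨k, hk⟩ := ha
    obtain ⟨l, hl⟩ := hb
    exact ⟨k + l, pow_eq_zero_of_le (by omega) hk, pow_eq_zero_of_le (by omega) hl⟩
  have expand : ∀ x : A, x ^ (m + 2) = 0 → ∀ k : ℕ,
      exp (k • x) = ∑ i ∈ range (m + 2), (k : ℚ) ^ i • ((i ! : ℚ)⁻¹ • x ^ i) := by
    intro x hx k
    rw [exp_eq_sum (by rw [_root_.smul_pow, hx, smul_zero])]
    refine sum_congr rfl fun i _ => ?_
    rw [_root_.smul_pow, smul_comm, ← Nat.cast_smul_eq_nsmul ℚ, Nat.cast_pow]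
  -- `k ↦ exp (k • a) - exp (k • b)` is a polynomial in `k` vanishing on `ℕ`; read off its
  -- linear coefficient.
  have key := eq_zero_of_forall_sum_natCast_pow_smul_eq_zero (K := ℚ) (m := m + 2)
    (v := fun i => (i ! : ℚ)⁻¹ • (a ^ i - b ^ i)) (j := 1) (fun k => by
      simp only [smul_sub, sum_sub_distrib, ← expand a ham, ← expand b hbm, exp_nsmul ha,
        exp_nsmul hb, h, sub_self]) (by omega)
  simpa [sub_eq_zero] using key

end IsNilpotent

theorem NormedSpace.exp_eq_isNilpotent_exp {A : Type*} [Ring A] [Algebra ℚ A]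
    [TopologicalSpace A] [IsTopologicalRing A] {a : A} (ha : IsNilpotent a) :
    exp a = IsNilpotent.exp a := by
  obtain ⟨k, hk⟩ := ha
  rw [exp_eq_tsum_rat, IsNilpotent.exp_eq_sum hk]
  exact tsum_eq_sum fun i hi => by rw [pow_eq_zero_of_le (by simpa using hi) hk, smul_zero]

namespace Matrix

theorem exists_squarefree_aeval_diagonal_eq_zero {ι K : Type*} [Fintype ι] [DecidableEq ι]
    [Field K] (d : ι → K) : ∃ p : K[X], Squarefree p ∧ aeval (diagonal d) p = 0 := by
  classical
  refine ⟨∏ μ ∈ univ.image d, (X - C μ),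
    (separable_prod_X_sub_C_iff'.mpr fun _ _ _ _ h => h).squarefree, ?_⟩
  rw [← diagonalAlgHom_apply K, aeval_algHom_apply, aeval_pi_apply]
  have hroots : (fun i => aeval (d i) (∏ μ ∈ univ.image d, (X - C μ))) = 0 :=
    funext fun i => by
      simpa using prod_eq_zero (mem_image_of_mem d (mem_univ i)) (sub_self _)
  rw [hroots, map_zero]

theorem isNilpotent_isSemisimple_unique {ι K : Type*} [Fintype ι] [DecidableEq ι] [Field K]
    [PerfectField K] {n₁ s₁ n₂ s₂ : Matrix ι ι K}
    (hn₁ : IsNilpotent n₁) (hs₁ : Module.End.IsSemisimple (toLin' s₁))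
    (hn₂ : IsNilpotent n₂) (hs₂ : Module.End.IsSemisimple (toLin' s₂))
    (hc₁ : Commute n₁ s₁) (hc₂ : Commute n₂ s₂) (h : n₁ + s₁ = n₂ + s₂) :
    n₁ = n₂ ∧ s₁ = s₂ := by
  let e : Matrix ι ι K ≃ₐ[K] Module.End K (ι → K) := toLinAlgEquiv'
  have he : e n₁ + e s₁ = e n₂ + e s₂ := by simp only [← map_add, h]
  simpa only [e.injective.eq_iff, toLin'.injective.eq_iff] using
    Module.End.isNilpotent_isSemisimple_unique (hn₁.map e) hs₁ (hn₂.map e) hs₂ (hc₁.map e)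
      (hc₂.map e) he

variable {n : ℕ}

theorem IsDiagonalizable.smul {A : Matrix (Fin n) (Fin n) ℂ} (hA : A.IsDiagonalizable) (c : ℂ) :
    (c • A).IsDiagonalizable := by
  obtain ⟨P, hP, hD⟩ := hA
  exact ⟨P, hP, by simpa [Matrix.mul_smul, Matrix.smul_mul] using hD.smul c⟩

theorem IsDiagonalizable.exp {A : Matrix (Fin n) (Fin n) ℂ} (hA : A.IsDiagonalizable) :
    (NormedSpace.exp A).IsDiagonalizable := by
  obtain ⟨P, hP, hD⟩ := hA
  refine ⟨P, hP, ?_⟩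
  rw [← exp_conj P A hP, ← hD.diagonal_diag, exp_diagonal]
  exact isDiag_diagonal _

theorem IsDiagonalizable.isSemisimple_toLin'_s19 {A : Matrix (Fin n) (Fin n) ℂ}
    (hA : A.IsDiagonalizable) : Module.End.IsSemisimple (toLin' A) := by
  obtain ⟨P, hP, hD⟩ := hA
  obtain ⟨p, hp, hpD⟩ := exists_squarefree_aeval_diagonal_eq_zero (P * A * P⁻¹).diag
  refine Module.End.isSemisimple_of_squarefree_aeval_eq_zero hp ?_
  have hdet := (isUnit_iff_isUnit_det P).mp hP
  have hpA : aeval A p = 0 := by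
    have hconj : A = P⁻¹ * (P * A * P⁻¹) * P := by
      simp only [Matrix.mul_assoc, nonsing_inv_mul _ hdet, Matrix.mul_one]
      rw [← Matrix.mul_assoc, nonsing_inv_mul _ hdet, Matrix.one_mul]
    rw [hconj, aeval_conj_of_mul_eq_one (nonsing_inv_mul _ hdet) (mul_nonsing_inv _ hdet),
      ← hD.diagonal_diag, hpD, Matrix.mul_zero, Matrix.zero_mul]
  show aeval (toLinAlgEquiv' A) p = 0
  rw [← AlgEquiv.coe_toAlgHom, aeval_algHom_apply, hpA, map_zero]

theorem isNilpotent_exp_mul_exp_sub_one {S N : Matrix (Fin n) (Fin n) ℂ} (hSN : Commute S N)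
    (hN : IsNilpotent N) : IsNilpotent (NormedSpace.exp S * (NormedSpace.exp N - 1)) := by
  refine (hSN.exp.sub_right (Commute.one_right _)).isNilpotent_mul_left ?_
  rw [NormedSpace.exp_eq_isNilpotent_exp hN]
  exact IsNilpotent.isNilpotent_exp_sub_one hN

theorem exp_eq_exp_of_exp_add_eq_exp_add {S N S' N' : Matrix (Fin n) (Fin n) ℂ}
    (hS : S.IsDiagonalizable) (hN : IsNilpotent N) (hSN : Commute S N)
    (hS' : S'.IsDiagonalizable) (hN' : IsNilpotent N') (hSN' : Commute S' N')
    (h : NormedSpace.exp (S + N) = NormedSpace.exp (S' + N')) :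
    NormedSpace.exp S = NormedSpace.exp S' ∧ NormedSpace.exp N = NormedSpace.exp N' := by
  have decomp : ∀ {S N : Matrix (Fin n) (Fin n) ℂ}, Commute S N → NormedSpace.exp (S + N) =
      NormedSpace.exp S * (NormedSpace.exp N - 1) + NormedSpace.exp S := fun hc => by
    rw [exp_add_of_commute _ _ hc, mul_sub, mul_one, sub_add_cancel]
  obtain ⟨hnil, hss⟩ := isNilpotent_isSemisimple_unique
    (isNilpotent_exp_mul_exp_sub_one hSN hN) hS.exp.isSemisimple_toLin'_s19
    (isNilpotent_exp_mul_exp_sub_one hSN' hN') hS'.exp.isSemisimple_toLin'_s19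
    ((Commute.refl _).mul_right (hSN.exp.sub_right (Commute.one_right _))).symm
    ((Commute.refl _).mul_right (hSN'.exp.sub_right (Commute.one_right _))).symm
    (by rw [← decomp hSN, ← decomp hSN', h])
  rw [hss] at hnil
  exact ⟨hss, sub_left_injective ((isUnit_exp S').mul_left_cancel hnil)⟩

end Matrix

/-- If `A = S + N` and `B = S' + N'` are Jordan–Chevalley decompositions and
`exp(2πi A) = exp(2πi B)`, then `exp(2πi S) = exp(2πi S')` and `N = N'`. -/
theorem exp_semisimple_eq_and_nilpotent_eq_of_exp_eq {n : ℕ}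
    (A B S N S' N' : Matrix (Fin n) (Fin n) ℂ)
    (hA : A = S + N) (hS : S.IsDiagonalizable) (hN : IsNilpotent N)
    (hSN : S * N = N * S)
    (hB : B = S' + N') (hS' : S'.IsDiagonalizable) (hN' : IsNilpotent N')
    (hSN' : S' * N' = N' * S')
    (h : NormedSpace.exp ((2 * (Real.pi : ℂ) * Complex.I) • A) =
      NormedSpace.exp ((2 * (Real.pi : ℂ) * Complex.I) • B)) :
    NormedSpace.exp ((2 * (Real.pi : ℂ) * Complex.I) • S) =
        NormedSpace.exp ((2 * (Real.pi : ℂ) * Complex.I) • S') ∧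
      N = N' := by
  set c : ℂ := 2 * (Real.pi : ℂ) * Complex.I
  have hc : c ≠ 0 := by simp [c, Real.pi_ne_zero, Complex.I_ne_zero]
  rw [hA, hB, smul_add, smul_add] at h
  obtain ⟨hexpS, hexpN⟩ := Matrix.exp_eq_exp_of_exp_add_eq_exp_add
    (hS.smul c) (hN.smul c) ((Commute.smul_left hSN c).smul_right c)
    (hS'.smul c) (hN'.smul c) ((Commute.smul_left hSN' c).smul_right c) h
  rw [NormedSpace.exp_eq_isNilpotent_exp (hN.smul c),
    NormedSpace.exp_eq_isNilpotent_exp (hN'.smul c)] at hexpN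
  exact ⟨hexpS,
    smul_right_injective _ hc (IsNilpotent.eq_of_exp_eq (hN.smul c) (hN'.smul c) hexpN)⟩
end
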